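/- arXiv:2208.00611 — 5 statements merged into one kernel-verified Lean document; each statement's English description precedes it below -/
import Mathlib

section
/- A finite group cannot have exactly two maximal cyclic subgroups. -/
def IsMaximalCyclic {G : Type*} [Group G] (M : Subgroup G) : Prop :=
  (∃ g : G, M = Subgroup.zpowers g) ∧
    ∀ N : Subgroup G, (∃ g : G, N = Subgroup.zpowers g) → M ≤ N → N = M

/-! A group is never the union of two proper subgroups, and the maximal cyclic subgroups of a
finite group cover it. So if there were exactly two of them, one would be the whole group, hence
cyclic, and then it would be the only maximal cyclic subgroup. -/

theorem exists_isMaximalCyclic_mem {G : Type*} [Group G] [Finite G] (g : G) :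
    ∃ M : Subgroup G, IsMaximalCyclic M ∧ g ∈ M := by
  obtain ⟨M, ⟨hM_cyclic, hgM⟩, hM_max⟩ := Set.Finite.exists_maximalFor id
      {N : Subgroup G | (∃ x, N = Subgroup.zpowers x) ∧ g ∈ N} (Set.toFinite _)
      ⟨Subgroup.zpowers g, ⟨g, rfl⟩, Subgroup.mem_zpowers g⟩
  refine ⟨M, ⟨hM_cyclic, fun N hN hMN => ?_⟩, hgM⟩
  exact le_antisymm (hM_max ⟨hN, hMN hgM⟩ hMN) hMN

theorem IsMaximalCyclic.eq_of_top_le {G : Type*} [Group G] {M N : Subgroup G}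
    (hM : IsMaximalCyclic M) (hN : IsMaximalCyclic N) (hN_top : ⊤ ≤ N) : M = N :=
  (hM.2 N hN.1 (le_top.trans hN_top)).symm

theorem two_maximal_cyclic_impossible {G : Type*} [Group G] [Finite G] :
    Set.ncard {M : Subgroup G | IsMaximalCyclic M} ≠ 2 := by
  intro h
  obtain ⟨M₁, M₂, hne, hset⟩ := Set.ncard_eq_two.mp h
  have hmem : ∀ {M}, IsMaximalCyclic M ↔ M = M₁ ∨ M = M₂ := fun {M} =>
    Set.ext_iff.mp hset M
  have hM₁ : IsMaximalCyclic M₁ := hmem.mpr (Or.inl rfl)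
  have hM₂ : IsMaximalCyclic M₂ := hmem.mpr (Or.inr rfl)
  have hcover : ((⊤ : Subgroup G) : Set G) ⊆ M₁ ∪ M₂ := by
    intro g _
    obtain ⟨M, hM, hgM⟩ := exists_isMaximalCyclic_mem g
    rcases hmem.mp hM with rfl | rfl
    exacts [Or.inl hgM, Or.inr hgM]
  rcases SubgroupClass.subset_union.mp hcover with h₁ | h₂
  · exact hne (hM₂.eq_of_top_le hM₁ h₁).symm
  · exact hne (hM₁.eq_of_top_le hM₂ h₂)
end

section
/- Let G be a finite non-cyclic simple group and let d1, d2 be orders of non-identity elements of G. For each element x of order d1 there exists an element y of order d2 such that x and y do not commute. -/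
/-!
If `x` commuted with every element of order `d₂`, it would commute with the whole conjugacy class
of an element `g ≠ 1` of that order, hence with the normal closure of `g`, which is all of `G` by
simplicity. So `x` would be central; but the center of a simple group that is not cyclic (that is,
not abelian) is trivial, while `x ≠ 1` because `d₁` is the order of a non-identity element.
-/

theorem IsConj.orderOf_eq {G : Type*} [Group G] {a b : G} (h : IsConj a b) :
    orderOf a = orderOf b := by
  obtain ⟨c, rfl⟩ := isConj_iff.mp h
  exact SemiconjBy.orderOf_eq c (by simp [SemiconjBy, mul_assoc])

namespace IsSimpleGroup

open Subgroup

variable {G : Type*} [Group G] [IsSimpleGroup G]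

theorem normalClosure_singleton_eq_top {g : G} (hg : g ≠ 1) : normalClosure {g} = ⊤ :=
  normalClosure_normal.eq_bot_or_eq_top.resolve_left fun h =>
    hg <| by simpa [h] using subset_normalClosure (Set.mem_singleton g)

theorem center_eq_bot_of_not_isCyclic (hG : ¬ IsCyclic G) : center G = ⊥ :=
  (center G).normal_of_characteristic.eq_bot_or_eq_top.resolve_right fun h =>
    hG <| letI : CommGroup G :=
      { mul_comm := fun a b => (mem_center_iff.mp (h ▸ mem_top b) a) }
    isCyclic

theorem mem_center_of_forall_isConj_commute {g x : G} (hg : g ≠ 1)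
    (h : ∀ y, IsConj g y → Commute x y) : x ∈ center G := by
  have hle : normalClosure {g} ≤ centralizer {x} := (closure_le _).2 fun y hy => by
    obtain ⟨_, rfl, hgy⟩ := Group.mem_conjugatesOfSet_iff.1 hy
    exact mem_centralizer_singleton_iff.2 (h y hgy).symm
  rw [normalClosure_singleton_eq_top hg, top_le_iff, centralizer_eq_top_iff_subset] at hle
  exact hle rfl

end IsSimpleGroup

theorem simple_noncyclic_noncommuting_general {G : Type*} [Group G]
    [IsSimpleGroup G] (hG : ¬ IsCyclic G) (d₁ d₂ : ℕ)
    (g₁ : G) (hg₁ : g₁ ≠ 1) (hd₁ : orderOf g₁ = d₁)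
    (g₂ : G) (hg₂ : g₂ ≠ 1) (hd₂ : orderOf g₂ = d₂)
    (x : G) (hx : orderOf x = d₁) :
    ∃ y : G, orderOf y = d₂ ∧ x * y ≠ y * x := by
  by_contra! h
  have hx₁ : x ≠ 1 := by
    rintro rfl
    exact hg₁ (orderOf_eq_one_iff.mp (hd₁.trans (hx.symm.trans orderOf_one)))
  have hx_center : x ∈ Subgroup.center G :=
    IsSimpleGroup.mem_center_of_forall_isConj_commute hg₂ fun y hy =>
      h y (hy.orderOf_eq.symm.trans hd₂)
  rw [IsSimpleGroup.center_eq_bot_of_not_isCyclic hG, Subgroup.mem_bot] at hx_center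
  exact hx₁ hx_center

theorem simple_noncyclic_noncommuting {G : Type*} [Group G] [Finite G]
    [IsSimpleGroup G] (hG : ¬ IsCyclic G) (d₁ d₂ : ℕ)
    (g₁ : G) (hg₁ : g₁ ≠ 1) (hd₁ : orderOf g₁ = d₁)
    (g₂ : G) (hg₂ : g₂ ≠ 1) (hd₂ : orderOf g₂ = d₂)
    (x : G) (hx : orderOf x = d₁) :
    ∃ y : G, orderOf y = d₂ ∧ x * y ≠ y * x :=
  simple_noncyclic_noncommuting_general hG d₁ d₂ g₁ hg₁ hd₁ g₂ hg₂ hd₂ x hx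
end

section
/- Let G be a finite non-cyclic group of order n. Then λ(P_E(G)) ≤ 2n − 4, with equality if and only if G ≅ ℤ/2 × ℤ/2. -/
def enhancedPowerGraph (G : Type*) [Group G] : SimpleGraph G where
  Adj x y := x ≠ y ∧ ∃ z : G, x ∈ Subgroup.zpowers z ∧ y ∈ Subgroup.zpowers z
  symm := by
    constructor
    rintro x y ⟨h, z, hx, hy⟩
    exact ⟨h.symm, z, hy, hx⟩
  loopless := by
    constructor
    rintro x ⟨h, -⟩
    exact h rfl

noncomputable def lambdaNumber {V : Type*} (Γ : SimpleGraph V) : ℕ :=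
  sInf {k : ℕ | ∃ f : V → ℕ, (∀ v, f v ≤ k) ∧
    (∀ u v, Γ.Adj u v → 2 ≤ Nat.dist (f u) (f v)) ∧
    (∀ u v, Γ.dist u v = 2 → 1 ≤ Nat.dist (f u) (f v))}

/-!
Two elements of `G` lying in no common cyclic subgroup are non-adjacent in `P_E(G)`, and a finite
group in which every two elements lie in a common cyclic subgroup is cyclic.

If `v₁, …, vₘ` is a path in the complement of a graph `Γ` on `n` vertices, label the `vᵢ` by
`0, …, m - 1` and the remaining vertices by `m + 1, m + 3, …`: only consecutive `vᵢ`, which are not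
adjacent, get consecutive labels, so `λ(Γ) ≤ 2n - 1 - m`. If `x, y` lie in no common cyclic
subgroup, then `y, x, xy` is such a path, whence `λ ≤ 2n - 4`. For `n ≥ 5` there is one on four
vertices (`y, x, xy, x⁻¹` when `x² ≠ 1`), so the bound is not attained. For the Klein four-group,
the identity is adjacent to the three involutions, which need distinct labels away from its own,
so `λ ≥ 4 = 2n - 4`.
-/

theorem List.Nodup.exists_append_nodup_forall_mem {α : Type*} [Fintype α] {l : List α}
    (hl : l.Nodup) :
    ∃ r : List α, (l ++ r).Nodup ∧ (∀ a, a ∈ l ++ r) ∧ (l ++ r).length = Fintype.card α := by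
  classical
  set r := (Finset.univ.filter (· ∉ l)).toList
  have hnd : (l ++ r).Nodup := List.nodup_append.mpr
    ⟨hl, Finset.nodup_toList _, fun a ha b hb ↦ by rintro rfl; simp_all [r]⟩
  have hmem : ∀ a, a ∈ l ++ r := fun a ↦ by by_cases a ∈ l <;> simp [r, *]
  refine ⟨r, hnd, hmem, ?_⟩
  rw [← List.toFinset_card_of_nodup hnd, ← Finset.card_univ]
  exact congrArg Finset.card (Finset.eq_univ_of_forall (by simpa using hmem))

namespace SimpleGraph

variable {V : Type*} (Γ : SimpleGraph V)

def IsL21Labeling (f : V → ℕ) : Prop :=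
  (∀ u v, Γ.Adj u v → 2 ≤ Nat.dist (f u) (f v)) ∧
    ∀ u v, Γ.dist u v = 2 → 1 ≤ Nat.dist (f u) (f v)

variable {Γ}

theorem lambdaNumber_le {f : V → ℕ} {k : ℕ} (hf : Γ.IsL21Labeling f) (hk : ∀ v, f v ≤ k) :
    lambdaNumber Γ ≤ k :=
  Nat.sInf_le ⟨f, hk, hf⟩

theorem exists_isL21Labeling_le_lambdaNumber {f : V → ℕ} {k : ℕ} (hf : Γ.IsL21Labeling f)
    (hk : ∀ v, f v ≤ k) : ∃ g : V → ℕ, Γ.IsL21Labeling g ∧ ∀ v, g v ≤ lambdaNumber Γ := by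
  obtain ⟨g, hg, hgl⟩ := Nat.sInf_mem (⟨k, f, hk, hf⟩ : {k : ℕ | ∃ f : V → ℕ, (∀ v, f v ≤ k) ∧
    Γ.IsL21Labeling f}.Nonempty)
  exact ⟨g, hgl, hg⟩

theorem isL21Labeling_of_injective {f : V → ℕ} (hf : Function.Injective f)
    (hadj : ∀ u v, Γ.Adj u v → f u + 1 ≠ f v) : Γ.IsL21Labeling f := by
  refine ⟨fun u v huv ↦ ?_, fun u v huv ↦ ?_⟩
  · have := hf.ne huv.ne
    have := hadj u v huv
    have := hadj v u huv.symm
    simp only [Nat.dist]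
    omega
  · have : u ≠ v := by rintro rfl; simp at huv
    have := hf.ne this
    simp only [Nat.dist]
    omega

theorem dist_eq_two_of_adj_of_adj {c u v : V} (hu : Γ.Adj c u) (hv : Γ.Adj c v) (huv : u ≠ v)
    (hnadj : ¬ Γ.Adj u v) : Γ.dist u v = 2 := by
  have hle : Γ.dist u v ≤ 2 := dist_le (.cons hu.symm (.cons hv .nil))
  have h0 : Γ.dist u v ≠ 0 := by
    rwa [Ne, (hu.symm.reachable.trans hv.reachable).dist_eq_zero_iff]
  have h1 : Γ.dist u v ≠ 1 := by rwa [Ne, dist_eq_one_iff_adj]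
  omega

theorem IsL21Labeling.ne_of_adj_of_adj {f : V → ℕ} (hf : Γ.IsL21Labeling f) {c u v : V}
    (hu : Γ.Adj c u) (hv : Γ.Adj c v) (huv : u ≠ v) : f u ≠ f v := by
  by_cases h : Γ.Adj u v
  · have := hf.1 u v h
    simp only [Nat.dist] at this
    omega
  · have := hf.2 u v (dist_eq_two_of_adj_of_adj hu hv huv h)
    simp only [Nat.dist] at this
    omega

theorem exists_isL21Labeling_of_isChain_compl [Finite V] {l : List V} (hl : l.Nodup)
    (hc : l.IsChain Γᶜ.Adj) :
    ∃ f : V → ℕ, Γ.IsL21Labeling f ∧ ∀ v, f v ≤ 2 * Nat.card V - 1 - l.length := by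
  classical
  have := Fintype.ofFinite V
  obtain ⟨r, hnd, hmem, hlen⟩ := hl.exists_append_nodup_forall_mem
  have hidx (v : V) : (l ++ r).idxOf v < (l ++ r).length := List.idxOf_lt_length_iff.mpr (hmem v)
  let g (i : ℕ) : ℕ := if i < l.length then i else 2 * i + 1 - l.length
  refine ⟨fun v ↦ g ((l ++ r).idxOf v), isL21Labeling_of_injective ?_ ?_, fun v ↦ ?_⟩
  · intro u v huv
    have : (l ++ r).idxOf u = (l ++ r).idxOf v := by
      simp only [g] at huv
      split_ifs at huv <;> omega
    exact (List.idxOf_inj (hmem u)).mp this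
  · intro u v huv hg
    have hi : (l ++ r).idxOf u + 1 = (l ++ r).idxOf v ∧ (l ++ r).idxOf v < l.length := by
      simp only [g] at hg
      split_ifs at hg <;> omega
    obtain ⟨hi, hj⟩ := hi
    have hget (w : V) (hw : (l ++ r).idxOf w < l.length) : l[(l ++ r).idxOf w] = w := by
      rw [← List.getElem_append_left (bs := r)]
      exact List.getElem_idxOf (hidx w)
    have := hc.getElem ((l ++ r).idxOf u) (by omega)
    simp only [hi, hget u (by omega), hget v hj] at this
    exact (Γ.compl_adj u v).mp this |>.2 huv
  · have := hidx v
    rw [Nat.card_eq_fintype_card, ← hlen]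
    simp only [g, List.length_append] at this ⊢
    split_ifs <;> omega

theorem lambdaNumber_le_of_isChain_compl [Finite V] {l : List V} (hl : l.Nodup)
    (hc : l.IsChain Γᶜ.Adj) : lambdaNumber Γ ≤ 2 * Nat.card V - 1 - l.length :=
  let ⟨_, hf, hk⟩ := exists_isL21Labeling_of_isChain_compl hl hc
  lambdaNumber_le hf hk

theorem four_le_lambdaNumber_of_adj [Finite V] {c x y z : V} (hx : Γ.Adj c x)
    (hy : Γ.Adj c y) (hz : Γ.Adj c z) (hxy : x ≠ y) (hxz : x ≠ z) (hyz : y ≠ z) :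
    4 ≤ lambdaNumber Γ := by
  obtain ⟨f, hf, hk⟩ := exists_isL21Labeling_of_isChain_compl (Γ := Γ) List.nodup_nil .nil
  obtain ⟨g, hg, hgl⟩ := exists_isL21Labeling_le_lambdaNumber hf hk
  have := hg.ne_of_adj_of_adj hx hy hxy
  have := hg.ne_of_adj_of_adj hx hz hxz
  have := hg.ne_of_adj_of_adj hy hz hyz
  have := hg.1 c x hx
  have := hg.1 c y hy
  have := hg.1 c z hz
  have := hgl x
  have := hgl y
  have := hgl z
  have := hgl c
  simp only [Nat.dist] at *
  omega

end SimpleGraph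

open Subgroup

section

variable {G : Type*} [Group G]

def NoCommonZPowers (x y : G) : Prop := ∀ z : G, x ∈ zpowers z → y ∉ zpowers z

namespace NoCommonZPowers

variable {x y : G}

theorem symm (h : NoCommonZPowers x y) : NoCommonZPowers y x := fun z hy hx ↦ h z hx hy

theorem of_mem_zpowers {u v : G} (h : NoCommonZPowers x y) (hx : x ∈ zpowers u)
    (hy : y ∈ zpowers v) : NoCommonZPowers u v := fun z hu hv ↦
  h z (zpowers_le.mpr hu hx) (zpowers_le.mpr hv hy)

theorem ne_one_left (h : NoCommonZPowers x y) : x ≠ 1 := by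
  rintro rfl
  exact h y (one_mem _) (mem_zpowers y)

theorem ne_one_right (h : NoCommonZPowers x y) : y ≠ 1 := h.symm.ne_one_left

theorem ne (h : NoCommonZPowers x y) : x ≠ y := by
  rintro rfl
  exact h x (mem_zpowers x) (mem_zpowers x)

theorem self_mul (h : NoCommonZPowers x y) : NoCommonZPowers x (x * y) := fun z hx hxy ↦
  h z hx (by simpa using mul_mem (inv_mem hx) hxy)

theorem mul_self (h : NoCommonZPowers x y) : NoCommonZPowers (x * y) y := fun z hxy hy ↦
  h z (by simpa using mul_mem hxy (inv_mem hy)) hy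

theorem mul_inv (h : NoCommonZPowers x y) : NoCommonZPowers (x * y) x⁻¹ := fun z hxy hx ↦
  h z (inv_mem_iff.mp hx) (by simpa using mul_mem hx hxy)

end NoCommonZPowers

theorem exists_noCommonZPowers [Finite G] (hG : ¬ IsCyclic G) :
    ∃ x y : G, NoCommonZPowers x y := by
  by_contra! h
  simp only [NoCommonZPowers, not_forall, not_not] at h
  apply hG
  -- a cyclic subgroup of maximal order absorbs every element
  obtain ⟨z, hz⟩ := Finite.exists_max (orderOf : G → ℕ)
  refine isCyclic_iff_exists_zpowers_eq_top.mpr ⟨z, eq_top_iff.mpr fun x _ ↦ ?_⟩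
  obtain ⟨w, hzw, hxw⟩ := h z x
  have : zpowers z = zpowers w := eq_of_le_of_card_ge (zpowers_le.mpr hzw)
    (by simpa only [Nat.card_zpowers] using hz w)
  exact this ▸ hxw

theorem four_le_card_of_not_isCyclic [Finite G] (hG : ¬ IsCyclic G) : 4 ≤ Nat.card G := by
  by_contra! h
  interval_cases hc : Nat.card G
  · exact Nat.card_pos.ne' hc
  · have := (Nat.card_eq_one_iff_unique.mp hc).1
    exact hG inferInstance
  · exact hG (isCyclic_of_prime_card (p := 2) hc)
  · exact hG (isCyclic_of_prime_card (p := 3) hc)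

theorem nonempty_mulEquiv_of_card_eq_four [Finite G] (hG : ¬ IsCyclic G) (h4 : Nat.card G = 4) :
    Nonempty (G ≃* (Multiplicative (ZMod 2) × Multiplicative (ZMod 2))) := by
  have : Nontrivial G := Finite.one_lt_card_iff_nontrivial.mp (by omega)
  have hexp : Monoid.exponent G = 2 := by
    refine (Monoid.exponent_eq_prime_iff Nat.prime_two).mpr fun g hg ↦ ?_
    have hdvd : orderOf g ∣ 2 ^ 2 := by simpa [h4] using orderOf_dvd_natCard g
    obtain ⟨k, hk, hgk⟩ := (Nat.dvd_prime_pow Nat.prime_two).mp hdvd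
    interval_cases k
    · exact absurd (orderOf_eq_one_iff.mp hgk) hg
    · exact hgk
    · exact absurd (isCyclic_of_orderOf_eq_card g (by rw [hgk, h4]; rfl)) hG
  have : IsKleinFour G := ⟨h4, hexp⟩
  obtain ⟨e⟩ := IsKleinFour.nonempty_mulEquiv (G₁ := G) (G₂ := Multiplicative (ZMod 2 × ZMod 2))
  exact ⟨e.trans (MulEquiv.prodMultiplicative _ _)⟩

theorem eq_of_mem_zpowers_of_orderOf_eq_two [Finite G] {w x y : G} (hx : x ∈ zpowers w)
    (hy : y ∈ zpowers w) (hxo : orderOf x = 2) (hyo : orderOf y = 2) : x = y := by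
  classical
  have := Fintype.ofFinite (zpowers w)
  have hdvd : 2 ∣ Fintype.card (zpowers w) := by
    rw [← hxo, ← orderOf_mk x hx]
    exact orderOf_dvd_card
  have hcard := IsCyclic.card_orderOf_eq_totient hdvd
  rw [Nat.totient_two] at hcard
  have := Finset.card_le_one.mp hcard.le ⟨x, hx⟩ (by simp [hxo]) ⟨y, hy⟩ (by simp [hyo])
  simpa using this

theorem mem_zpowers_of_even_orderOf [Finite G] {w x z : G} (hx : x ∈ zpowers w)
    (hz : z ∈ zpowers w) (hxo : orderOf x = 2) (hze : Even (orderOf z)) : x ∈ zpowers z := by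
  obtain ⟨m, hm⟩ := hze
  have hm0 : m ≠ 0 := by have := orderOf_pos z; omega
  have hzm : orderOf (z ^ m) = 2 := by
    rw [orderOf_pow_of_dvd hm0 ⟨2, by omega⟩, hm, ← two_mul, Nat.mul_div_cancel _ (by omega)]
  rw [eq_of_mem_zpowers_of_orderOf_eq_two hx (pow_mem hz m) hxo hzm]
  exact pow_mem (mem_zpowers z) m

namespace NoCommonZPowers

variable {x y : G}

theorem exists_isChain_length_three (h : NoCommonZPowers x y) :
    ∃ l : List G, l.length = 3 ∧ l.Nodup ∧ l.IsChain NoCommonZPowers :=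
  ⟨[y, x, x * y], rfl, by simp [h.ne.symm, h.ne_one_left, h.ne_one_right],
    by simp [h.symm, h.self_mul]⟩

theorem exists_isChain_length_four_of_sq_ne_one (h : NoCommonZPowers x y) (hx : x ^ 2 ≠ 1) :
    ∃ l : List G, l.length = 4 ∧ l.Nodup ∧ l.IsChain NoCommonZPowers := by
  refine ⟨[y, x, x * y, x⁻¹], rfl, ?_, by simp [h.symm, h.self_mul, h.mul_inv]⟩
  have hyx : y ≠ x⁻¹ := fun hyx ↦ h x (mem_zpowers x) (hyx ▸ inv_mem (mem_zpowers x))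
  have hxx : x ≠ x⁻¹ := fun hxx ↦ hx (by rw [sq, ← eq_inv_iff_mul_eq_one.mp hxx])
  have hxyx : x * y ≠ x⁻¹ := fun hxyx ↦ h x (mem_zpowers x)
    (eq_inv_mul_of_mul_eq hxyx ▸ mul_mem (inv_mem (mem_zpowers x)) (inv_mem (mem_zpowers x)))
  simp [h.ne.symm, h.ne_one_left, h.ne_one_right, hyx, hxx, hxyx]

-- A cyclic group has at most one involution, so `z` has odd order; then `x` is a power of `z * x`.
theorem mul_left_of_orderOf_eq_two [Finite G] {z w₁ w₂ : G} (h : NoCommonZPowers x y)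
    (hxo : orderOf x = 2) (hyo : orderOf y = 2) (hz : z ≠ 1)
    (hzw₁ : z ∈ zpowers w₁) (hxw₁ : x ∈ zpowers w₁) (hzw₂ : z ∈ zpowers w₂)
    (hyw₂ : y ∈ zpowers w₂) :
    NoCommonZPowers (z * x) y ∧ (z * x) ^ 2 ≠ 1 := by
  have hodd : Odd (orderOf z) := by
    rw [← Nat.not_even_iff_odd]
    intro he
    exact h z (mem_zpowers_of_even_orderOf hxw₁ hzw₁ hxo he)
      (mem_zpowers_of_even_orderOf hyw₂ hzw₂ hyo he)
  have hcomm : Commute z x := by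
    obtain ⟨i, rfl⟩ := hzw₁
    obtain ⟨j, rfl⟩ := hxw₁
    exact Commute.zpow_zpow_self w₁ i j
  have hpow : (z * x) ^ orderOf z = x := by
    rw [hcomm.mul_pow, pow_orderOf_eq_one, one_mul, ← pow_mod_orderOf, hxo,
      Nat.odd_iff.mp hodd, pow_one]
  have hx : x ∈ zpowers (z * x) := by
    simpa only [hpow] using pow_mem (mem_zpowers (z * x)) (orderOf z)
  refine ⟨h.of_mem_zpowers hx (mem_zpowers y), fun h1 ↦ hz ?_⟩
  rw [hcomm.mul_pow, ← hxo, pow_orderOf_eq_one, mul_one] at h1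
  rcases (Nat.dvd_prime Nat.prime_two).mp (hxo ▸ orderOf_dvd_of_pow_eq_one h1) with h1 | h2
  · exact orderOf_eq_one_iff.mp h1
  · exact absurd (h2 ▸ hodd) (by decide)

end NoCommonZPowers

theorem exists_isChain_noCommonZPowers_length_four [Finite G] (hG : ¬ IsCyclic G)
    (h5 : 5 ≤ Nat.card G) : ∃ l : List G, l.length = 4 ∧ l.Nodup ∧ l.IsChain NoCommonZPowers := by
  classical
  obtain ⟨x, y, h⟩ := exists_noCommonZPowers hG
  by_cases hx : x ^ 2 = 1
  swap
  · exact h.exists_isChain_length_four_of_sq_ne_one hx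
  by_cases hy : y ^ 2 = 1
  swap
  · exact h.symm.exists_isChain_length_four_of_sq_ne_one hy
  have := Fintype.ofFinite G
  obtain ⟨z, -, hz⟩ := Finset.exists_mem_notMem_of_card_lt_card
    (s := {1, x, y, x * y}) (t := Finset.univ)
    (Finset.card_le_four.trans_lt (by rw [Finset.card_univ, ← Nat.card_eq_fintype_card]; omega))
  simp only [Finset.mem_insert, Finset.mem_singleton, not_or] at hz
  obtain ⟨hz1, hzx, hzy, hzxy⟩ := hz
  by_cases hzx' : NoCommonZPowers z x
  · exact ⟨[z, x, y, x * y], rfl, by simp [hzx, hzy, hzxy, h.ne, h.ne_one_left, h.ne_one_right],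
      by simp [hzx', h, h.mul_self.symm]⟩
  by_cases hzy' : NoCommonZPowers z y
  · exact ⟨[z, y, x, x * y], rfl,
      by simp [hzx, hzy, hzxy, h.ne.symm, h.ne_one_left, h.ne_one_right],
      by simp [hzy', h.symm, h.self_mul]⟩
  simp only [NoCommonZPowers, not_forall, not_not] at hzx' hzy'
  obtain ⟨w₁, hzw₁, hxw₁⟩ := hzx'
  obtain ⟨w₂, hzw₂, hyw₂⟩ := hzy'
  obtain ⟨hzxy', hsq⟩ := h.mul_left_of_orderOf_eq_two (orderOf_eq_prime hx h.ne_one_left)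
    (orderOf_eq_prime hy h.ne_one_right) hz1 hzw₁ hxw₁ hzw₂ hyw₂
  exact hzxy'.exists_isChain_length_four_of_sq_ne_one hsq

theorem NoCommonZPowers.compl_adj {x y : G} (h : NoCommonZPowers x y) :
    (enhancedPowerGraph G)ᶜ.Adj x y :=
  (SimpleGraph.compl_adj _ _ _).mpr ⟨h.ne, fun ⟨_, z, hx, hy⟩ ↦ h z hx hy⟩

theorem enhancedPowerGraph_adj_one {x : G} (hx : x ≠ 1) : (enhancedPowerGraph G).Adj 1 x :=
  ⟨hx.symm, x, one_mem _, mem_zpowers x⟩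

theorem lambdaNumber_enhancedPowerGraph_le [Finite G] {l : List G} (hl : l.Nodup)
    (hc : l.IsChain NoCommonZPowers) :
    lambdaNumber (enhancedPowerGraph G) ≤ 2 * Nat.card G - 1 - l.length :=
  SimpleGraph.lambdaNumber_le_of_isChain_compl hl (hc.imp fun _ _ h ↦ h.compl_adj)

theorem four_le_lambdaNumber_enhancedPowerGraph [Finite G] (h4 : 4 ≤ Nat.card G) :
    4 ≤ lambdaNumber (enhancedPowerGraph G) := by
  classical
  have := Fintype.ofFinite G
  have : 2 < (Finset.univ.erase (1 : G)).card := by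
    rw [Finset.card_erase_of_mem (Finset.mem_univ _), Finset.card_univ,
      ← Nat.card_eq_fintype_card]
    omega
  obtain ⟨x, hx, y, hy, z, hz, hxy, hxz, hyz⟩ := Finset.two_lt_card.mp this
  exact SimpleGraph.four_le_lambdaNumber_of_adj
    (enhancedPowerGraph_adj_one (Finset.ne_of_mem_erase hx))
    (enhancedPowerGraph_adj_one (Finset.ne_of_mem_erase hy))
    (enhancedPowerGraph_adj_one (Finset.ne_of_mem_erase hz)) hxy hxz hyz

end

theorem lambda_enhancedPowerGraph_noncyclic {G : Type*} [Group G] [Finite G]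
    (hG : ¬ IsCyclic G) :
    lambdaNumber (enhancedPowerGraph G) ≤ 2 * Nat.card G - 4 ∧
      (lambdaNumber (enhancedPowerGraph G) = 2 * Nat.card G - 4 ↔
        Nonempty (G ≃* (Multiplicative (ZMod 2) × Multiplicative (ZMod 2)))) := by
  have h4 := four_le_card_of_not_isCyclic hG
  obtain ⟨x, y, h⟩ := exists_noCommonZPowers hG
  obtain ⟨l, hl, hnd, hc⟩ := h.exists_isChain_length_three
  have hub := lambdaNumber_enhancedPowerGraph_le hnd hc
  refine ⟨by omega, fun heq ↦ ?_, fun ⟨e⟩ ↦ ?_⟩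
  · by_contra hK
    have h5 : 5 ≤ Nat.card G := lt_of_le_of_ne h4 fun hcard ↦
      hK (nonempty_mulEquiv_of_card_eq_four hG hcard.symm)
    obtain ⟨l', hl', hnd', hc'⟩ := exists_isChain_noCommonZPowers_length_four hG h5
    have := lambdaNumber_enhancedPowerGraph_le hnd' hc'
    omega
  · have hcard : Nat.card G = 4 := by simp [Nat.card_congr e.toEquiv]
    have := four_le_lambdaNumber_enhancedPowerGraph h4
    omega
end

section
/- For a finite non-cyclic group G, the set G_M of elements generating some maximal cyclic subgroup has cardinality at least 3. -/
/-! Every element of a finite group lies in a maximal cyclic subgroup. Since a group is never the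
union of two proper subgroups and every cyclic subgroup of a non-cyclic group is proper, a generator
`a` of one maximal cyclic subgroup, a generator `b` of one containing some `u ∉ ⟨a⟩`, and a
generator `c` of one containing some `v ∉ ⟨a⟩ ∪ ⟨b⟩` are three distinct elements of `G_M`. -/

open Subgroup

section

variable {G : Type*} [Group G]

theorem isMaximalCyclic_iff_maximal {M : Subgroup G} :
    IsMaximalCyclic M ↔ Maximal (fun N : Subgroup G => ∃ g : G, N = zpowers g) M :=
  ⟨fun ⟨hM, hmax⟩ => ⟨hM, fun _ hN hle => (hmax _ hN hle).le⟩,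
    fun ⟨hM, hmax⟩ => ⟨hM, fun _ hN hle => le_antisymm (hmax hN hle) hle⟩⟩

theorem exists_isMaximalCyclic_zpowers_mem [Finite G] (x : G) :
    ∃ m : G, IsMaximalCyclic (zpowers m) ∧ x ∈ zpowers m := by
  obtain ⟨M, hxM, hmax⟩ := Finite.exists_le_maximal
    (p := fun N : Subgroup G => ∃ g : G, N = zpowers g) ⟨x, rfl⟩
  obtain ⟨m, rfl⟩ := hmax.1
  exact ⟨m, isMaximalCyclic_iff_maximal.mpr hmax, hxM (mem_zpowers x)⟩

theorem exists_notMem_zpowers_of_not_isCyclic (hG : ¬IsCyclic G) (a b : G) :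
    ∃ v : G, v ∉ zpowers a ∧ v ∉ zpowers b := by
  by_contra! hcover
  have htop : ((⊤ : Subgroup G) : Set G) ⊆ zpowers a ∪ zpowers b :=
    fun v _ => or_iff_not_imp_left.mpr (hcover v)
  rcases SubgroupClass.subset_union.mp htop with ha | hb
  · exact hG (isCyclic_iff_exists_zpowers_eq_top.mpr ⟨a, top_le_iff.mp ha⟩)
  · exact hG (isCyclic_iff_exists_zpowers_eq_top.mpr ⟨b, top_le_iff.mp hb⟩)

end

theorem maximal_cyclic_generators_ge_three {G : Type*} [Group G] [Finite G]
    (hG : ¬ IsCyclic G) :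
    3 ≤ Set.ncard {x : G | IsMaximalCyclic (Subgroup.zpowers x)} := by
  obtain ⟨a, ha, -⟩ := exists_isMaximalCyclic_zpowers_mem (1 : G)
  obtain ⟨u, hua, -⟩ := exists_notMem_zpowers_of_not_isCyclic hG a a
  obtain ⟨b, hb, hub⟩ := exists_isMaximalCyclic_zpowers_mem u
  obtain ⟨v, hva, hvb⟩ := exists_notMem_zpowers_of_not_isCyclic hG a b
  obtain ⟨c, hc, hvc⟩ := exists_isMaximalCyclic_zpowers_mem v
  refine (Set.two_lt_ncard_iff).mpr ⟨a, b, c, ha, hb, hc, ?_, ?_, ?_⟩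
  · rintro rfl
    exact hua hub
  · rintro rfl
    exact hva hvc
  · rintro rfl
    exact hvb hvc
end

section
/- A finite non-cyclic group G has exactly three elements generating maximal cyclic subgroups if and only if G ≅ ℤ/2 × ℤ/2. -/
open Subgroup

instance : IsKleinFour (Multiplicative (ZMod 2) × Multiplicative (ZMod 2)) where
  card_four := by simp
  exponent_two := by simp [Monoid.exponent_prod]

theorem IsKleinFour.of_mulEquiv {G H : Type*} [Group G] [Group H] [IsKleinFour H] (e : G ≃* H) :
    IsKleinFour G where
  card_four := by rw [Nat.card_congr e.toEquiv, IsKleinFour.card_four]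
  exponent_two := by rw [Monoid.exponent_eq_of_mulEquiv e, IsKleinFour.exponent_two]

section

variable {G : Type*} [Group G] [Finite G]

theorem isMaximalCyclic_zpowers_iff {x : G} :
    IsMaximalCyclic (zpowers x) ↔ ∀ y : G, x ∈ zpowers y → orderOf y ≤ orderOf x := by
  refine ⟨fun hx y hy => ?_, fun h => ⟨⟨x, rfl⟩, ?_⟩⟩
  · rw [← Nat.card_zpowers, ← Nat.card_zpowers, hx.2 _ ⟨y, rfl⟩ (zpowers_le.2 hy)]
  · rintro _ ⟨y, rfl⟩ hle
    refine (eq_of_le_of_card_ge hle ?_).symm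
    simpa only [Nat.card_zpowers] using h y (zpowers_le.1 hle)

theorem exists_mem_zpowers_isMaximalCyclic (x : G) :
    ∃ g : G, x ∈ zpowers g ∧ IsMaximalCyclic (zpowers g) := by
  obtain ⟨g, hxg, hmax⟩ := Set.exists_max_image {g : G | x ∈ zpowers g} orderOf
    (Set.toFinite _) ⟨x, mem_zpowers x⟩
  exact ⟨g, hxg, isMaximalCyclic_zpowers_iff.2 fun y hgy => hmax y (zpowers_le.2 hgy hxg)⟩

theorem exists_isMaximalCyclic_zpowers_ne (hG : ¬IsCyclic G) (a b : G) :
    ∃ g : G, IsMaximalCyclic (zpowers g) ∧ zpowers g ≠ zpowers a ∧ zpowers g ≠ zpowers b := by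
  have hlt : ∀ c : G, ¬(⊤ : Subgroup G) ≤ zpowers c := fun c hc =>
    hG (isCyclic_iff_exists_zpowers_eq_top.2 ⟨c, top_le_iff.1 hc⟩)
  obtain ⟨x, hx⟩ : ∃ x : G, x ∉ (zpowers a : Set G) ∪ zpowers b := by
    by_contra! h
    exact (SubgroupClass.subset_union.1 fun y _ => h y).elim (hlt a) (hlt b)
  obtain ⟨g, hxg, hg⟩ := exists_mem_zpowers_isMaximalCyclic x
  exact ⟨g, hg, fun h => hx (.inl (h ▸ hxg)), fun h => hx (.inr (h ▸ hxg))⟩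

theorem inv_eq_self_of_ncard_setOf_isMaximalCyclic_eq_three (hG : ¬IsCyclic G)
    (h3 : {x : G | IsMaximalCyclic (zpowers x)}.ncard = 3) {s : G}
    (hs : IsMaximalCyclic (zpowers s)) : s⁻¹ = s := by
  by_contra hinv
  obtain ⟨g, hg, hgs, -⟩ := exists_isMaximalCyclic_zpowers_ne hG s s
  obtain ⟨h, hh, hhs, hhg⟩ := exists_isMaximalCyclic_zpowers_ne hG s g
  have hsub : ({s⁻¹, s, g, h} : Set G) ⊆ {x | IsMaximalCyclic (zpowers x)} := by
    rintro _ (rfl | rfl | rfl | rfl) <;> simp_all [zpowers_inv]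
  have h4 : ({s⁻¹, s, g, h} : Set G).ncard = 4 := by
    have hne : ∀ {a b : G}, zpowers a ≠ zpowers b → a ≠ b ∧ a⁻¹ ≠ b := fun hab =>
      ⟨fun h => hab (h ▸ rfl), fun h => hab (by rw [← h, zpowers_inv])⟩
    rw [Set.ncard_insert_of_notMem, Set.ncard_insert_of_notMem, Set.ncard_pair] <;>
      grind [hne hgs, hne hhs, hne hhg]
  have := Set.ncard_le_ncard hsub
  omega

theorem exponent_eq_two_of_ncard_setOf_isMaximalCyclic_eq_three (hG : ¬IsCyclic G)
    (h3 : {x : G | IsMaximalCyclic (zpowers x)}.ncard = 3) : Monoid.exponent G = 2 := by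
  have := Nontrivial.of_not_isCyclic hG
  refine (Monoid.exponent_eq_prime_iff Nat.prime_two).2 fun x hx => ?_
  obtain ⟨g, hxg, hg⟩ := exists_mem_zpowers_isMaximalCyclic x
  have hg2 : g ^ 2 = 1 := by
    rw [sq, mul_eq_one_iff_eq_inv, inv_eq_self_of_ncard_setOf_isMaximalCyclic_eq_three hG h3 hg]
  exact (Nat.prime_two.eq_one_or_self_of_dvd _
    ((orderOf_dvd_of_mem_zpowers hxg).trans (orderOf_dvd_of_pow_eq_one hg2))).resolve_left
    (by rwa [orderOf_eq_one_iff])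

theorem setOf_isMaximalCyclic_eq_of_exponent_eq_two (hG : Monoid.exponent G = 2) :
    {x : G | IsMaximalCyclic (zpowers x)} = {1}ᶜ := by
  have : Nontrivial G := by
    rw [← not_subsingleton_iff_nontrivial, ← Monoid.exp_eq_one_iff, hG]
    decide
  ext x
  simp only [Set.mem_ofPred_eq, Set.mem_compl_iff, Set.mem_singleton_iff,
    isMaximalCyclic_zpowers_iff]
  by_cases hx : x = 1
  · obtain ⟨y, hy⟩ := exists_ne (1 : G)
    refine iff_of_false (fun h => ?_) (not_not.2 hx)
    have := h y (hx ▸ one_mem _)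
    rw [hx, orderOf_one, (orderOf_eq_two_iff hG).2 hy] at this
    omega
  · rw [(orderOf_eq_two_iff hG).2 hx]
    exact iff_of_true (fun y _ => Nat.le_of_dvd two_pos (hG ▸ Monoid.order_dvd_exponent y)) hx

theorem ncard_setOf_isMaximalCyclic_add_one_of_exponent_eq_two (hG : Monoid.exponent G = 2) :
    {x : G | IsMaximalCyclic (zpowers x)}.ncard + 1 = Nat.card G := by
  rw [setOf_isMaximalCyclic_eq_of_exponent_eq_two hG, ← Set.ncard_singleton (1 : G),
    Set.ncard_compl_add_ncard]

end

theorem maximal_cyclic_generators_eq_three_iff_klein {G : Type*} [Group G] [Finite G]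
    (hG : ¬ IsCyclic G) :
    Set.ncard {x : G | IsMaximalCyclic (Subgroup.zpowers x)} = 3 ↔
      Nonempty (G ≃* (Multiplicative (ZMod 2) × Multiplicative (ZMod 2))) := by
  constructor
  · intro h3
    have hexp := exponent_eq_two_of_ncard_setOf_isMaximalCyclic_eq_three hG h3
    have hcard := ncard_setOf_isMaximalCyclic_add_one_of_exponent_eq_two hexp
    have : IsKleinFour G := ⟨by omega, hexp⟩
    exact IsKleinFour.nonempty_mulEquiv
  · rintro ⟨e⟩
    have := IsKleinFour.of_mulEquiv e
    have hcard := ncard_setOf_isMaximalCyclic_add_one_of_exponent_eq_two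
      (IsKleinFour.exponent_two (G := G))
    rw [IsKleinFour.card_four] at hcard
    omega
end
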